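/- Let φ_n(λ,q) be defined by the recursion φ_{n+1} = (λ - q_{n+1}) φ_n - φ_{n-1} with φ_0 = 0, φ_1 = 1 (the solution of the discrete Schrödinger equation y_{n-1} + y_{n+1} + q_n y_n = λ y_n with Dirichlet-type initial data). Then for n even, φ_{n+1}(λ,q) = (-1)^{n/2} Σ_{j=0}^{n/2} (-1)^j F_{2j}^n(λ,q), and for n odd, φ_{n+1}(λ,q) = (-1)^{(n-1)/2} Σ_{j=0}^{(n-1)/2} (-1)^j F_{2j+1}^n(λ,q). -/
import Mathlib


/-- The predicate describing membership in `T_j^n`: `α` is strictly increasing,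
`1 ≤ α s ≤ n`, and with `α (j+1) := n+1` every consecutive difference is odd. -/
def isT (j n : ℕ) (α : Fin j → ℕ) : Prop :=
  StrictMono α ∧ (∀ s, 1 ≤ α s ∧ α s ≤ n) ∧
    ∀ s : Fin j,
      Odd ((if h : (s : ℕ) + 1 < j then (α ⟨(s : ℕ) + 1, h⟩ : ℤ) else (n : ℤ) + 1)
        - (α s : ℤ))

open Classical in
/-- `Fpoly j n lam q = F_j^n(λ,q) = Σ_{α ∈ T_j^n} Π_{s=1}^j (λ - q (α s))`,
with `F_0^n = 1`. -/
noncomputable def Fpoly (j n : ℕ) (lam : ℂ) (q : ℕ → ℂ) : ℂ :=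
  ∑ β : Fin j → Fin (n + 2),
    if isT j n (fun s => (β s : ℕ)) then ∏ s, (lam - q (β s)) else 0


/-- The fundamental solution `φ_n(λ,q)` of the discrete Schrödinger equation
`y_{n-1} + y_{n+1} + q_n y_n = λ y_n`, with `φ_0 = 0`, `φ_1 = 1`; the potential
entry at step `n` multiplies `φ_n`, i.e. `φ_{n+1} = (λ - q_n) φ_n - φ_{n-1}`. -/
noncomputable def phi (lam : ℂ) (q : ℕ → ℂ) : ℕ → ℂ
  | 0 => 0
  | 1 => 1
  | n + 2 => (lam - q (n + 1)) * phi lam q (n + 1) - phi lam q n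

/-! ### Auxiliary lemmas -/

/-- A convenient reformulation of the oddness condition in `isT`. -/
def oddCond (J M : ℕ) (α : Fin J → ℕ) : Prop :=
  ∀ (k : ℕ) (hk : k < J),
    Odd ((if h : k + 1 < J then (α ⟨k + 1, h⟩ : ℤ) else (M : ℤ) + 1) - (α ⟨k, hk⟩ : ℤ))

lemma isT_iff {J M : ℕ} {α : Fin J → ℕ} :
    isT J M α ↔ StrictMono α ∧ (∀ s, 1 ≤ α s ∧ α s ≤ M) ∧ oddCond J M α := by
  constructor
  · rintro ⟨h1, h2, h3⟩
    exact ⟨h1, h2, fun k hk => h3 ⟨k, hk⟩⟩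
  · rintro ⟨h1, h2, h3⟩
    exact ⟨h1, h2, fun s => h3 s.1 s.2⟩

lemma oddCond_two_iff {J n : ℕ} (α : Fin J → ℕ) :
    oddCond J (n + 2) α ↔ oddCond J n α := by
  constructor <;> intro h k hk <;> have h2 := h k hk <;> by_cases hb : k + 1 < J
  · rwa [dif_pos hb] at h2 ⊢
  · rw [dif_neg hb] at h2 ⊢
    rw [Int.odd_iff] at h2 ⊢
    push_cast at h2 ⊢
    omega
  · rwa [dif_pos hb] at h2 ⊢
  · rw [dif_neg hb] at h2 ⊢
    rw [Int.odd_iff] at h2 ⊢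
    push_cast at h2 ⊢
    omega

lemma not_isT_of_last {j n : ℕ} {α : Fin (j + 1) → ℕ}
    (hlast : α (Fin.last j) = n + 2) : ¬ isT (j + 1) n α := by
  rintro ⟨-, hb, -⟩
  have := (hb (Fin.last j)).2
  omega

lemma isT_snoc_iff {j n : ℕ} {α : Fin (j + 1) → ℕ}
    (hlast : α (Fin.last j) = n + 2) :
    isT (j + 1) (n + 2) α ↔ isT j (n + 1) (fun s => α s.castSucc) := by
  rw [isT_iff, isT_iff]
  constructor
  · rintro ⟨h1, h2, h3⟩
    refine ⟨fun a b hab => h1 (by simpa using hab), fun s => ?_, fun k hk => ?_⟩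
    · refine ⟨(h2 _).1, ?_⟩
      have := h1 (Fin.castSucc_lt_last s)
      rw [hlast] at this
      omega
    · have h4 := h3 k (by omega)
      rw [dif_pos (by omega : k + 1 < j + 1)] at h4
      by_cases hb : k + 1 < j
      · rw [dif_pos hb]
        exact h4
      · rw [dif_neg hb]
        have hkj : k + 1 = j := by omega
        have h5 : α ⟨k + 1, by omega⟩ = n + 2 := by
          have h6 : (⟨k + 1, by omega⟩ : Fin (j + 1)) = Fin.last j := Fin.ext (by simp [hkj])
          rw [h6, hlast]
        rw [h5] at h4
        have h4' : Odd ((((n + 2 : ℕ) : ℤ)) - ((α (Fin.castSucc ⟨k, hk⟩) : ℕ) : ℤ)) := h4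
        show Odd ((((n + 1 : ℕ) : ℤ)) + 1 - ((α (Fin.castSucc ⟨k, hk⟩) : ℕ) : ℤ))
        rw [Int.odd_iff] at h4' ⊢
        push_cast at h4' ⊢
        omega
  · rintro ⟨h1, h2, h3⟩
    have key : ∀ (x : Fin (j + 1)) (hx : (x : ℕ) < j), α x = α (Fin.castSucc ⟨x, hx⟩) :=
      fun x hx => congrArg α (Fin.ext rfl)
    have hlt : ∀ (x : Fin (j + 1)) (hx : (x : ℕ) < j), α x < n + 2 := by
      intro x hx
      have := (h2 ⟨x, hx⟩).2
      rw [← key x hx] at this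
      omega
    refine ⟨?_, fun s => ?_, fun k hk => ?_⟩
    · intro a b hab
      by_cases hbj : (b : ℕ) < j
      · have haj : (a : ℕ) < j := by
          have := hab
          rw [Fin.lt_def] at this
          omega
        rw [key a haj, key b hbj]
        exact h1 (by rw [Fin.lt_def] at hab ⊢; simpa using hab)
      · have hbl : b = Fin.last j := Fin.ext (by have := b.2; simp; omega)
        have haj : (a : ℕ) < j := by
          rw [Fin.lt_def] at hab
          have := b.2
          omega
        rw [hbl, hlast]
        exact hlt a haj
    · by_cases hs : (s : ℕ) < j
      · have := h2 ⟨s, hs⟩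
        rw [← key s hs] at this
        omega
      · have hsl : s = Fin.last j := Fin.ext (by have := s.2; simp; omega)
        rw [hsl, hlast]
        omega
    · by_cases hb : k + 1 < j + 1
      · rw [dif_pos hb]
        by_cases hbb : k + 1 < j
        · have h4 := h3 k (by omega)
          rw [dif_pos hbb] at h4
          exact h4
        · -- k + 1 = j, so α ⟨k+1⟩ = α last = n + 2
          have hkj : k + 1 = j := by omega
          have hk' : k < j := by omega
          have h4 := h3 k hk'
          rw [dif_neg hbb] at h4
          have h5 : α ⟨k + 1, hb⟩ = n + 2 := by
            have : (⟨k + 1, hb⟩ : Fin (j + 1)) = Fin.last j := Fin.ext (by simp [hkj])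
            rw [this, hlast]
          rw [h5]
          have h4' : Odd (((n + 1 : ℕ) : ℤ) + 1 - ((α (Fin.castSucc ⟨k, hk'⟩) : ℕ) : ℤ)) := h4
          show Odd (((n + 2 : ℕ) : ℤ) - ((α (Fin.castSucc ⟨k, hk'⟩) : ℕ) : ℤ))
          rw [Int.odd_iff] at h4' ⊢
          push_cast at h4' ⊢
          omega
      · -- k = j, last position
        rw [dif_neg hb]
        have hkj : k = j := by omega
        have h5 : α ⟨k, hk⟩ = n + 2 := by
          have : (⟨k, hk⟩ : Fin (j + 1)) = Fin.last j := Fin.ext (by simp [hkj])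
          rw [this, hlast]
        rw [h5]
        rw [Int.odd_iff]
        push_cast
        omega

lemma isT_ne_iff {j n : ℕ} {α : Fin (j + 1) → ℕ}
    (hlast : α (Fin.last j) ≠ n + 2) :
    isT (j + 1) (n + 2) α ↔ isT (j + 1) n α := by
  rw [isT_iff, isT_iff]
  constructor
  · rintro ⟨h1, h2, h3⟩
    have hle : α (Fin.last j) ≤ n := by
      have h4 := h3 j (by omega)
      rw [dif_neg (by omega)] at h4
      have h5 : α ⟨j, by omega⟩ = α (Fin.last j) := rfl
      rw [h5] at h4
      have h6 := (h2 (Fin.last j)).2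
      rw [Int.odd_iff] at h4
      push_cast at h4
      omega
    refine ⟨h1, fun s => ?_, (oddCond_two_iff α).mp h3⟩
    refine ⟨(h2 s).1, ?_⟩
    have := h1.monotone (Fin.le_last s)
    omega
  · rintro ⟨h1, h2, h3⟩
    exact ⟨h1, fun s => ⟨(h2 s).1, by have := (h2 s).2; omega⟩, (oddCond_two_iff α).mpr h3⟩

open Classical in
lemma sum_isT_eq (j m N : ℕ) (h : m ≤ N) (lam : ℂ) (q : ℕ → ℂ) :
    (∑ β : Fin j → Fin (N + 2),
      if isT j m (fun s => (β s : ℕ)) then ∏ s, (lam - q (β s)) else 0)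
      = Fpoly j m lam q := by
  classical
  have hm2 : m + 2 ≤ N + 2 := by omega
  set e : (Fin j → Fin (m + 2)) → (Fin j → Fin (N + 2)) :=
    fun δ s => Fin.castLE hm2 (δ s) with he
  have hinj : Function.Injective e := fun a b hab =>
    funext fun s => Fin.castLE_injective hm2 (congrFun hab s)
  have h0 : ∀ β ∈ (Finset.univ : Finset (Fin j → Fin (N + 2))),
      β ∉ Finset.univ.image e →
      (if isT j m (fun s => (β s : ℕ)) then ∏ s, (lam - q (β s)) else 0) = 0 := by
    intro β _ hβ
    rw [if_neg]
    intro hT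
    apply hβ
    have hb : ∀ s, (β s : ℕ) < m + 2 := fun s => by
      have h2 : (β s : ℕ) ≤ m := (hT.2.1 s).2
      omega
    refine Finset.mem_image.2 ⟨fun s => ⟨(β s : ℕ), hb s⟩, Finset.mem_univ _, ?_⟩
    funext s
    exact Fin.ext rfl
  calc (∑ β : Fin j → Fin (N + 2),
          if isT j m (fun s => (β s : ℕ)) then ∏ s, (lam - q (β s)) else 0)
      = ∑ β ∈ Finset.univ.image e,
          (if isT j m (fun s => (β s : ℕ)) then ∏ s, (lam - q (β s)) else 0) :=
        (Finset.sum_subset (Finset.subset_univ _) h0).symm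
    _ = ∑ δ : Fin j → Fin (m + 2),
          (if isT j m (fun s => ((e δ) s : ℕ)) then ∏ s, (lam - q ((e δ) s)) else 0) :=
        Finset.sum_image (fun x _ y _ hxy => hinj hxy)
    _ = Fpoly j m lam q := by
        rw [Fpoly]
        apply Finset.sum_congr rfl
        intro δ _
        simp [he, Fin.coe_castLE]

open Classical in
lemma Fpoly_rec (j n : ℕ) (lam : ℂ) (q : ℕ → ℂ) :
    Fpoly (j + 1) (n + 2) lam q
      = (lam - q (n + 2)) * Fpoly j (n + 1) lam q + Fpoly (j + 1) n lam q := by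
  classical
  rw [Fpoly]
  have point : ∀ β : Fin (j + 1) → Fin (n + 2 + 2),
      (if isT (j + 1) (n + 2) (fun s => (β s : ℕ)) then ∏ s, (lam - q (β s)) else 0)
      = (if (β (Fin.last j) : ℕ) = n + 2 then
           (if isT j (n + 1) (fun s : Fin j => (β s.castSucc : ℕ)) then
              (lam - q (n + 2)) * ∏ s : Fin j, (lam - q (β s.castSucc)) else 0)
         else 0)
        + (if isT (j + 1) n (fun s => (β s : ℕ)) then ∏ s, (lam - q (β s)) else 0) := by
    intro β
    by_cases hlast : (β (Fin.last j) : ℕ) = n + 2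
    · rw [if_pos hlast,
        isT_snoc_iff (α := fun s => (β s : ℕ)) hlast,
        if_neg (not_isT_of_last (α := fun s => (β s : ℕ)) hlast), add_zero]
      by_cases hT : isT j (n + 1) (fun s : Fin j => (β s.castSucc : ℕ))
      · rw [if_pos hT, if_pos hT, Fin.prod_univ_castSucc]
        rw [show q ((β (Fin.last j) : ℕ)) = q (n + 2) from by rw [hlast]]
        ring
      · rw [if_neg hT, if_neg hT]
    · rw [if_neg hlast, zero_add, isT_ne_iff (α := fun s => (β s : ℕ)) hlast]
  rw [Finset.sum_congr rfl (fun β _ => point β), Finset.sum_add_distrib]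
  congr 1
  · -- the snoc part
    rw [← Fintype.sum_equiv (Fin.snocEquiv (fun _ : Fin (j + 1) => Fin (n + 2 + 2))) _ _
      (fun p => rfl)]
    have heval : ∀ (p : Fin (n + 2 + 2) × (Fin j → Fin (n + 2 + 2))),
        (if ((Fin.snocEquiv (fun _ : Fin (j + 1) => Fin (n + 2 + 2)) p) (Fin.last j) : ℕ) = n + 2 then
           (if isT j (n + 1) (fun s : Fin j =>
               ((Fin.snocEquiv (fun _ : Fin (j + 1) => Fin (n + 2 + 2)) p) s.castSucc : ℕ)) then
              (lam - q (n + 2)) *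
                ∏ s : Fin j, (lam - q ((Fin.snocEquiv (fun _ : Fin (j + 1) => Fin (n + 2 + 2)) p) s.castSucc)) else 0)
         else 0)
        = (if (p.1 : ℕ) = n + 2 then
            (lam - q (n + 2)) *
              (if isT j (n + 1) (fun s : Fin j => (p.2 s : ℕ)) then
                ∏ s : Fin j, (lam - q (p.2 s)) else 0)
           else 0) := by
      rintro ⟨c, γ⟩
      have h1 : (Fin.snocEquiv (fun _ : Fin (j + 1) => Fin (n + 2 + 2)) (c, γ)) (Fin.last j) = c :=
        by simp [Fin.snocEquiv]
      have h2 : ∀ s : Fin j,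
          (Fin.snocEquiv (fun _ : Fin (j + 1) => Fin (n + 2 + 2)) (c, γ)) s.castSucc = γ s :=
        fun s => by simp [Fin.snocEquiv]
      simp only [h1, h2, mul_ite, mul_zero]
    rw [Finset.sum_congr rfl (fun p _ => heval p)]
    rw [Fintype.sum_prod_type]
    have hinner : ∀ c : Fin (n + 2 + 2),
        (∑ γ : Fin j → Fin (n + 2 + 2),
          (if (c : ℕ) = n + 2 then
            (lam - q (n + 2)) *
              (if isT j (n + 1) (fun s : Fin j => (γ s : ℕ)) then
                ∏ s : Fin j, (lam - q (γ s)) else 0)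
           else 0))
        = (if (c : ℕ) = n + 2 then (lam - q (n + 2)) * Fpoly j (n + 1) lam q else 0) := by
      intro c
      by_cases hc : (c : ℕ) = n + 2
      · simp only [if_pos hc]
        rw [← Finset.mul_sum, sum_isT_eq j (n + 1) (n + 2) (by omega)]
      · simp only [if_neg hc, Finset.sum_const_zero]
    rw [Finset.sum_congr rfl (fun c _ => hinner c)]
    rw [Finset.sum_eq_single (⟨n + 2, by omega⟩ : Fin (n + 2 + 2))]
    · rw [if_pos rfl]
    · intro c _ hc
      rw [if_neg]
      intro hcc
      exact hc (Fin.ext hcc)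
    · intro h
      exact absurd (Finset.mem_univ _) h
  · exact sum_isT_eq (j + 1) n (n + 2) (by omega) lam q

open Classical in
lemma Fpoly_zero (n : ℕ) (lam : ℂ) (q : ℕ → ℂ) : Fpoly 0 n lam q = 1 := by
  classical
  rw [Fpoly]
  have hall : ∀ β : Fin 0 → Fin (n + 2),
      (if isT 0 n (fun s => (β s : ℕ)) then ∏ s : Fin 0, (lam - q (β s)) else 0) = 1 := by
    intro β
    rw [if_pos ⟨fun a => a.elim0, fun s => s.elim0, fun s => s.elim0⟩, Fin.prod_univ_zero]
  rw [Finset.sum_congr rfl (fun β _ => hall β), Finset.sum_const, Finset.card_univ]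
  simp

open Classical in
lemma Fpoly_of_gt {j n : ℕ} (h : n < j) (lam : ℂ) (q : ℕ → ℂ) : Fpoly j n lam q = 0 := by
  classical
  rw [Fpoly]
  apply Finset.sum_eq_zero
  intro β _
  rw [if_neg]
  rintro ⟨hm, hb, -⟩
  have key : ∀ k, ∀ hk : k < j, k + 1 ≤ (β ⟨k, hk⟩ : ℕ) := by
    intro k
    induction k with
    | zero => exact fun hk => (hb ⟨0, hk⟩).1
    | succ k ih =>
      intro hk
      have h1 := ih (by omega)
      have h2 : (β ⟨k, by omega⟩ : ℕ) < (β ⟨k + 1, hk⟩ : ℕ) :=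
        hm (show (⟨k, by omega⟩ : Fin j) < ⟨k + 1, hk⟩ from by simp [Fin.lt_def])
      omega
  have h1 := key n h
  have h2 : (β ⟨n, h⟩ : ℕ) ≤ n := (hb ⟨n, h⟩).2
  omega

open Classical in
lemma Fpoly_one_one (lam : ℂ) (q : ℕ → ℂ) : Fpoly 1 1 lam q = lam - q 1 := by
  classical
  rw [Fpoly]
  rw [← Fintype.sum_equiv (Equiv.funUnique (Fin 1) (Fin 3)).symm _ _ (fun c => rfl)]
  have heval : ∀ c : Fin 3,
      (if isT 1 1 (fun s : Fin 1 => (((Equiv.funUnique (Fin 1) (Fin 3)).symm c) s : ℕ))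
        then ∏ s : Fin 1, (lam - q (((Equiv.funUnique (Fin 1) (Fin 3)).symm c) s)) else 0)
      = (if isT 1 1 (fun _ : Fin 1 => (c : ℕ)) then (lam - q c) else 0) := by
    intro c
    have h1 : ∀ s : Fin 1, ((Equiv.funUnique (Fin 1) (Fin 3)).symm c) s = c := fun s => rfl
    simp only [h1, Fin.prod_univ_one]
  rw [Finset.sum_congr rfl (fun c _ => heval c)]
  rw [Fin.sum_univ_three]
  have h0 : ¬ isT 1 1 (fun _ : Fin 1 => ((0 : Fin 3) : ℕ)) := by
    rintro ⟨-, hb, -⟩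
    have := (hb 0).1
    simp at this
  have h2 : ¬ isT 1 1 (fun _ : Fin 1 => ((2 : Fin 3) : ℕ)) := by
    rintro ⟨-, hb, -⟩
    have := (hb 0).2
    simp at this
  have h1 : isT 1 1 (fun _ : Fin 1 => ((1 : Fin 3) : ℕ)) := by
    refine ⟨fun a b hab => ?_, fun s => ?_, fun s => ?_⟩
    · rw [Subsingleton.elim a b] at hab
      exact absurd hab (lt_irrefl _)
    · exact ⟨le_refl _, le_refl _⟩
    · have hs : ¬ ((s : ℕ) + 1 < 1) := by omega
      rw [dif_neg hs]
      show Odd (((1 : ℕ) : ℤ) + 1 - (((1 : Fin 3) : ℕ) : ℤ))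
      decide
  rw [if_neg h0, if_pos h1, if_neg h2]
  simp

lemma main_pair (lam : ℂ) (q : ℕ → ℂ) : ∀ m : ℕ,
    (phi lam q (2 * m + 1)
      = (-1 : ℂ) ^ m * ∑ j ∈ Finset.range (m + 1), (-1 : ℂ) ^ j * Fpoly (2 * j) (2 * m) lam q) ∧
    (phi lam q (2 * m + 2)
      = (-1 : ℂ) ^ m * ∑ j ∈ Finset.range (m + 1), (-1 : ℂ) ^ j * Fpoly (2 * j + 1) (2 * m + 1) lam q) := by
  intro m
  induction m with
  | zero =>
    constructor
    · show phi lam q 1 = _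
      rw [phi]
      simp [Fpoly_zero]
    · show phi lam q 2 = _
      rw [show (2 : ℕ) = 0 + 2 from rfl, phi, phi, phi]
      simp [Fpoly_one_one]
  | succ m ih =>
    obtain ⟨h1, h2⟩ := ih
    set c : ℂ := lam - q (2 * m + 2) with hc
    set c' : ℂ := lam - q (2 * m + 3) with hc'
    set A : ℂ := ∑ j ∈ Finset.range (m + 1), (-1 : ℂ) ^ j * Fpoly (2 * j + 1) (2 * m + 1) lam q with hA
    set B : ℂ := ∑ j ∈ Finset.range (m + 1), (-1 : ℂ) ^ j * Fpoly (2 * j) (2 * m) lam q with hB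
    -- even step
    have keyE : ∑ j ∈ Finset.range (m + 1 + 1), (-1 : ℂ) ^ j * Fpoly (2 * j) (2 * m + 2) lam q
        = -c * A + B := by
      rw [Finset.sum_range_succ' (fun j => (-1 : ℂ) ^ j * Fpoly (2 * j) (2 * m + 2) lam q) (m + 1)]
      have hterm : ∀ j, (-1 : ℂ) ^ (j + 1) * Fpoly (2 * (j + 1)) (2 * m + 2) lam q
          = -c * ((-1 : ℂ) ^ j * Fpoly (2 * j + 1) (2 * m + 1) lam q)
            + (-1 : ℂ) ^ (j + 1) * Fpoly (2 * (j + 1)) (2 * m) lam q := by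
        intro j
        rw [show 2 * (j + 1) = (2 * j + 1) + 1 from by ring,
          show 2 * m + 2 = (2 * m) + 2 from rfl, Fpoly_rec, hc]
        ring
      rw [Finset.sum_congr rfl (fun j _ => hterm j), Finset.sum_add_distrib]
      have hT : ∑ j ∈ Finset.range (m + 1), (-1 : ℂ) ^ (j + 1) * Fpoly (2 * (j + 1)) (2 * m) lam q
          + (-1 : ℂ) ^ 0 * Fpoly (2 * 0) (2 * m + 2) lam q = B := by
        rw [show (Fpoly (2 * 0) (2 * m + 2) lam q) = Fpoly (2 * 0) (2 * m) lam q from by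
          rw [show 2 * 0 = 0 from rfl, Fpoly_zero, Fpoly_zero]]
        rw [← Finset.sum_range_succ' (fun j => (-1 : ℂ) ^ j * Fpoly (2 * j) (2 * m) lam q) (m + 1)]
        rw [Finset.sum_range_succ, Fpoly_of_gt (by omega), mul_zero, add_zero, hB]
      calc ∑ j ∈ Finset.range (m + 1), -c * ((-1 : ℂ) ^ j * Fpoly (2 * j + 1) (2 * m + 1) lam q)
            + ∑ j ∈ Finset.range (m + 1), (-1 : ℂ) ^ (j + 1) * Fpoly (2 * (j + 1)) (2 * m) lam q
            + (-1 : ℂ) ^ 0 * Fpoly (2 * 0) (2 * m + 2) lam q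
          = -c * A + (∑ j ∈ Finset.range (m + 1), (-1 : ℂ) ^ (j + 1) * Fpoly (2 * (j + 1)) (2 * m) lam q
            + (-1 : ℂ) ^ 0 * Fpoly (2 * 0) (2 * m + 2) lam q) := by
            rw [hA, Finset.mul_sum]
            ring
        _ = -c * A + B := by rw [hT]
    have hphiE : phi lam q (2 * (m + 1) + 1) = c * phi lam q (2 * m + 2) - phi lam q (2 * m + 1) := by
      show phi lam q (2 * m + 1 + 2) = _
      rw [phi]
    have hE : phi lam q (2 * (m + 1) + 1)
        = (-1 : ℂ) ^ (m + 1) * ∑ j ∈ Finset.range (m + 1 + 1),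
            (-1 : ℂ) ^ j * Fpoly (2 * j) (2 * (m + 1)) lam q := by
      rw [hphiE, h1, h2, show 2 * (m + 1) = 2 * m + 2 from by ring, keyE, pow_succ]
      ring
    refine ⟨hE, ?_⟩
    -- odd step
    have keyO : ∑ j ∈ Finset.range (m + 1 + 1), (-1 : ℂ) ^ j * Fpoly (2 * j + 1) (2 * m + 3) lam q
        = c' * (∑ j ∈ Finset.range (m + 1 + 1), (-1 : ℂ) ^ j * Fpoly (2 * j) (2 * m + 2) lam q) + A := by
      have hterm : ∀ j, (-1 : ℂ) ^ j * Fpoly (2 * j + 1) (2 * m + 3) lam q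
          = c' * ((-1 : ℂ) ^ j * Fpoly (2 * j) (2 * m + 2) lam q)
            + (-1 : ℂ) ^ j * Fpoly (2 * j + 1) (2 * m + 1) lam q := by
        intro j
        rw [show 2 * m + 3 = (2 * m + 1) + 2 from by ring, Fpoly_rec,
          show 2 * m + 1 + 1 + 1 = 2 * m + 3 from by ring,
          show 2 * m + 1 + 1 = 2 * m + 2 from by ring, hc']
        ring
      rw [Finset.sum_congr rfl (fun j _ => hterm j), Finset.sum_add_distrib]
      congr 1
      · rw [Finset.mul_sum]
      · rw [Finset.sum_range_succ, Fpoly_of_gt (by omega), mul_zero, add_zero, hA]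
    have hphiO : phi lam q (2 * (m + 1) + 2) = c' * phi lam q (2 * (m + 1) + 1) - phi lam q (2 * m + 2) := by
      rw [show 2 * (m + 1) + 2 = 2 * m + 2 + 2 from by ring, phi,
        show 2 * (m + 1) + 1 = 2 * m + 2 + 1 from by ring, hc',
        show 2 * m + 2 + 1 = 2 * m + 3 from by omega]
    rw [hphiO, hE, h2,
      show 2 * (m + 1) = 2 * m + 2 from by ring,
      show 2 * m + 2 + 1 = 2 * m + 3 from by omega,
      keyO, keyE, pow_succ]
    ring

theorem phi_eq_sum_Fpoly (n : ℕ) (hn : 1 ≤ n) (lam : ℂ) (q : ℕ → ℂ) :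
    (Even n → phi lam q (n + 1)
      = (-1 : ℂ) ^ (n / 2) * ∑ j ∈ Finset.range (n / 2 + 1),
          (-1 : ℂ) ^ j * Fpoly (2 * j) n lam q) ∧
    (Odd n → phi lam q (n + 1)
      = (-1 : ℂ) ^ ((n - 1) / 2) * ∑ j ∈ Finset.range ((n - 1) / 2 + 1),
          (-1 : ℂ) ^ j * Fpoly (2 * j + 1) n lam q) := by
  constructor
  · intro hEven
    obtain ⟨m, hm⟩ := hEven
    obtain rfl : n = 2 * m := by omega
    rw [show 2 * m / 2 = m from by omega]
    exact (main_pair lam q m).1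
  · intro hOdd
    obtain ⟨m, hm⟩ := hOdd
    obtain rfl : n = 2 * m + 1 := by omega
    rw [show (2 * m + 1 - 1) / 2 = m from by omega]
    exact (main_pair lam q m).2
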